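/- Let n, t be integers with 0 ≤ t ≤ n, let Δ ≥ 0 be a real number, and let 0 < ε < 1. Let X = (X₁, X₂) be a distribution on {0,1}^{t} × {0,1}^{n−t} with min-entropy at least n − Δ. Then X is ε-close in statistical distance to some distribution (Y₁, Y₂) on {0,1}^{t} × {0,1}^{n−t} that is a (t − Δ, n − t − Δ − log₂(1/ε))-block source, i.e., Y₁ has min-entropy at least t − Δ, and for every y₁ in the support of Y₁ the conditional distribution of Y₂ given Y₁ = y₁ has min-entropy at least n − t − Δ − log₂(1/ε). -/

import Mathlib

/-- `P` is a (finitely supported) probability distribution on the finite type `T`. -/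
def IsProb {T : Type*} [Fintype T] (P : T → ℝ) : Prop :=
  (∀ t, 0 ≤ P t) ∧ ∑ t, P t = 1

/-- Statistical (total variation) distance `(1/2)·Σ_t |P t − Q t|`. -/
noncomputable def statDist {T : Type*} [Fintype T] (P Q : T → ℝ) : ℝ :=
  (∑ t, |P t - Q t|) / 2

/-- `P` has min-entropy at least `k`: every point has probability at most `2^{−k}`. -/
noncomputable def MinEntropyGe {T : Type*} [Fintype T] (P : T → ℝ) (k : ℝ) : Prop :=
  ∀ t, P t ≤ (2 : ℝ) ^ (-k)

/-- The pushforward of `P` along `f`. -/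
noncomputable def pushf {A B : Type*} [Fintype A] [DecidableEq B] (P : A → ℝ) (f : A → B) :
    B → ℝ :=
  fun b => ∑ a, if f a = b then P a else 0

/-- `E : {0,1}^n × {0,1}^d → {0,1}^m` is a `(k, ε)`-extractor: for every `k`-source `X`
on `{0,1}^n`, the distribution `E(X, U_d)` is `ε`-close to uniform on `{0,1}^m`. -/
noncomputable def IsExtractor {n d m : ℕ} (k ε : ℝ)
    (E : (Fin n → Bool) → (Fin d → Bool) → (Fin m → Bool)) : Prop :=
  ∀ P : (Fin n → Bool) → ℝ, IsProb P → MinEntropyGe P k →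
    statDist
      (pushf (fun q : (Fin n → Bool) × (Fin d → Bool) =>
          P q.1 / (Fintype.card (Fin d → Bool) : ℝ))
        (fun q => E q.1 q.2))
      (fun _ => 1 / (Fintype.card (Fin m → Bool) : ℝ)) ≤ ε

/-- `(P₁, P₂)` jointly form a `(k₁, k₂)`-block source: the first marginal has min-entropy
at least `k₁`, and every conditional distribution of the second coordinate given a
first coordinate in the support has min-entropy at least `k₂`. -/
noncomputable def IsBlockSource {A B : Type*} [Fintype A] [Fintype B] (k₁ k₂ : ℝ)
    (P : A × B → ℝ) : Prop :=
  (∀ a, (∑ b, P (a, b)) ≤ (2 : ℝ) ^ (-k₁)) ∧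
  (∀ a, 0 < (∑ b, P (a, b)) → ∀ b, P (a, b) / (∑ b', P (a, b')) ≤ (2 : ℝ) ^ (-k₂))

/-!
Cut the first coordinate at the threshold `τ = ε · 2^{-t}`. A row `a` whose marginal mass is
below `τ` is replaced by the uniform distribution on `{0,1}^{n-t}` with the same mass; this
moves at most `2^t · τ = ε` of probability in total and leaves every marginal unchanged, so the
first block keeps min-entropy `t − Δ`. On a light row the conditional distribution is now
uniform, and on a heavy row each point has conditional probability at most
`2^{-(n-Δ)} / τ = 2^{-(n - t - Δ - log₂(1/ε))}`.
-/

open Finset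

section FlattenLightRows

variable {A B : Type*} [Fintype B]

noncomputable def fstMarginal (P : A × B → ℝ) (a : A) : ℝ :=
  ∑ b, P (a, b)

noncomputable def flattenLightRows (τ : ℝ) (P : A × B → ℝ) : A × B → ℝ :=
  fun p => if fstMarginal P p.1 < τ then fstMarginal P p.1 / Fintype.card B else P p

variable {τ : ℝ} {P : A × B → ℝ}

lemma fstMarginal_nonneg (hP : ∀ p, 0 ≤ P p) (a : A) : 0 ≤ fstMarginal P a :=
  sum_nonneg fun b _ => hP (a, b)

lemma flattenLightRows_of_lt {a : A} (ha : fstMarginal P a < τ) (b : B) :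
    flattenLightRows τ P (a, b) = fstMarginal P a / Fintype.card B :=
  if_pos ha

lemma flattenLightRows_of_le {a : A} (ha : τ ≤ fstMarginal P a) (b : B) :
    flattenLightRows τ P (a, b) = P (a, b) :=
  if_neg ha.not_gt

lemma flattenLightRows_nonneg (hP : ∀ p, 0 ≤ P p) : ∀ p, 0 ≤ flattenLightRows τ P p := by
  rintro ⟨a, b⟩
  rcases lt_or_ge (fstMarginal P a) τ with ha | ha
  · rw [flattenLightRows_of_lt ha]
    exact div_nonneg (fstMarginal_nonneg hP a) (Nat.cast_nonneg _)
  · rw [flattenLightRows_of_le ha]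
    exact hP (a, b)

lemma fstMarginal_flattenLightRows (a : A) :
    fstMarginal (flattenLightRows τ P) a = fstMarginal P a := by
  rcases lt_or_ge (fstMarginal P a) τ with ha | ha
  · simp only [fstMarginal, flattenLightRows_of_lt ha, sum_const, card_univ, nsmul_eq_mul]
    rcases isEmpty_or_nonempty B
    · simp
    · exact mul_div_cancel₀ _ (Nat.cast_ne_zero.mpr Fintype.card_ne_zero)
  · simp only [fstMarginal, flattenLightRows_of_le ha]

lemma sum_abs_sub_flattenLightRows_le (hP : ∀ p, 0 ≤ P p) (hτ : 0 ≤ τ) (a : A) :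
    ∑ b, |P (a, b) - flattenLightRows τ P (a, b)| ≤ 2 * τ := by
  rcases lt_or_ge (fstMarginal P a) τ with ha | ha
  · calc ∑ b, |P (a, b) - flattenLightRows τ P (a, b)|
        ≤ ∑ b, (P (a, b) + flattenLightRows τ P (a, b)) :=
          sum_le_sum fun b _ => (abs_sub _ _).trans_eq <| by
            rw [abs_of_nonneg (hP _), abs_of_nonneg (flattenLightRows_nonneg hP _)]
      _ = fstMarginal P a + fstMarginal (flattenLightRows τ P) a := sum_add_distrib
      _ ≤ 2 * τ := by rw [fstMarginal_flattenLightRows]; linarith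
  · simp [flattenLightRows_of_le ha, hτ]

variable [Fintype A]

lemma sum_fstMarginal (P : A × B → ℝ) : ∑ a, fstMarginal P a = ∑ p, P p :=
  (Fintype.sum_prod_type _).symm

lemma fstMarginal_le_of_minEntropyGe {k : ℝ} (hent : MinEntropyGe P k) (a : A) :
    fstMarginal P a ≤ Fintype.card B * (2 : ℝ) ^ (-k) := by
  calc fstMarginal P a ≤ ∑ _b : B, (2 : ℝ) ^ (-k) := sum_le_sum fun b _ => hent (a, b)
    _ = Fintype.card B * (2 : ℝ) ^ (-k) := by simp

lemma isProb_flattenLightRows (hP : IsProb P) : IsProb (flattenLightRows τ P) := by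
  refine ⟨flattenLightRows_nonneg hP.1, ?_⟩
  simp_rw [← sum_fstMarginal, fstMarginal_flattenLightRows, sum_fstMarginal, hP.2]

lemma statDist_flattenLightRows_le (hP : ∀ p, 0 ≤ P p) (hτ : 0 ≤ τ) :
    statDist P (flattenLightRows τ P) ≤ Fintype.card A * τ := by
  rw [statDist, div_le_iff₀ two_pos, Fintype.sum_prod_type]
  calc ∑ a, ∑ b, |P (a, b) - flattenLightRows τ P (a, b)|
      ≤ ∑ _a : A, 2 * τ := sum_le_sum fun a _ => sum_abs_sub_flattenLightRows_le hP hτ a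
    _ = Fintype.card A * τ * 2 := by rw [sum_const, card_univ, nsmul_eq_mul]; ring

lemma isBlockSource_flattenLightRows {k k₁ k₂ : ℝ} (hent : MinEntropyGe P k)
    (hk₁ : Fintype.card B * (2 : ℝ) ^ (-k) ≤ 2 ^ (-k₁))
    (hk₂ : (Fintype.card B : ℝ)⁻¹ ≤ 2 ^ (-k₂))
    (hτ : (2 : ℝ) ^ (-k) ≤ τ * 2 ^ (-k₂)) :
    IsBlockSource k₁ k₂ (flattenLightRows τ P) := by
  refine ⟨fun a => ?_, fun a hpos b => ?_⟩
  · exact (fstMarginal_flattenLightRows a).trans_le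
      ((fstMarginal_le_of_minEntropyGe hent a).trans hk₁)
  · change 0 < fstMarginal _ a at hpos
    change _ / fstMarginal _ a ≤ _
    rw [fstMarginal_flattenLightRows] at hpos ⊢
    rcases lt_or_ge (fstMarginal P a) τ with ha | ha
    · rwa [flattenLightRows_of_lt ha, div_div_cancel_left' hpos.ne']
    · rw [flattenLightRows_of_le ha, div_le_iff₀ hpos]
      calc P (a, b) ≤ (2 : ℝ) ^ (-k) := hent (a, b)
        _ ≤ τ * 2 ^ (-k₂) := hτ
        _ ≤ 2 ^ (-k₂) * fstMarginal P a := by rw [mul_comm]; gcongr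

end FlattenLightRows

lemma card_fun_fin_bool (m : ℕ) : (Fintype.card (Fin m → Bool) : ℝ) = (2 : ℝ) ^ (m : ℝ) :=
  by simp

/-- **block-source decomposition.** If `X = (X₁, X₂)` on
`{0,1}^t × {0,1}^{n−t}` has min-entropy at least `n − Δ`, then `X` is `ε`-close to some
`(Y₁, Y₂)` that is a `(t − Δ, n − t − Δ − log₂(1/ε))`-block source. -/
theorem stmt_18 (n t : ℕ) (ht : t ≤ n) (Δ : ℝ) (hΔ : 0 ≤ Δ)
    (ε : ℝ) (hε0 : 0 < ε) (hε1 : ε < 1)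
    (P : (Fin t → Bool) × (Fin (n - t) → Bool) → ℝ)
    (hP : IsProb P) (hent : MinEntropyGe P ((n : ℝ) - Δ)) :
    ∃ Q : (Fin t → Bool) × (Fin (n - t) → Bool) → ℝ,
      IsProb Q ∧ statDist P Q ≤ ε ∧
        IsBlockSource ((t : ℝ) - Δ) ((n : ℝ) - t - Δ - Real.logb 2 (1 / ε)) Q := by
  have hcard : (Fintype.card (Fin (n - t) → Bool) : ℝ) = 2 ^ ((n : ℝ) - t) := by
    rw [card_fun_fin_bool, Nat.cast_sub ht]
  have hlog : 0 ≤ Real.logb 2 (1 / ε) :=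
    Real.logb_nonneg one_lt_two ((one_le_div hε0).mpr hε1.le)
  have h2log : (2 : ℝ) ^ Real.logb 2 (1 / ε) = 1 / ε :=
    Real.rpow_logb two_pos (by norm_num) (by positivity)
  refine ⟨flattenLightRows (ε * 2 ^ (-(t : ℝ))) P, isProb_flattenLightRows hP, ?_,
    isBlockSource_flattenLightRows hent ?_ ?_ ?_⟩
  · refine (statDist_flattenLightRows_le hP.1 (by positivity)).trans_eq ?_
    rw [card_fun_fin_bool, Real.rpow_neg zero_le_two]
    field_simp
  · rw [hcard, ← Real.rpow_add two_pos]
    exact le_of_eq (congrArg _ (by ring))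
  · rw [hcard, ← Real.rpow_neg zero_le_two]
    exact Real.rpow_le_rpow_of_exponent_le one_le_two (by linarith)
  · refine le_of_eq ?_
    rw [show -((n : ℝ) - t - Δ - Real.logb 2 (1 / ε)) = -(n - Δ) + t + Real.logb 2 (1 / ε) by
        ring, Real.rpow_add two_pos, Real.rpow_add two_pos, h2log,
      Real.rpow_neg zero_le_two (t : ℝ)]
    field_simp
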